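/- arXiv:1609.03028 — 6 statements merged into one kernel-verified Lean document; each statement's English description precedes it below -/
import Mathlib

section
/- If R is a group acting on a group G such that G is a central product G = G₁ * ⋯ * Gₙ of perfect subgroups G₁,…,Gₙ, the action of R permutes the set {G₁,…,Gₙ} semiregularly, G is finite, and the orders of R and G are coprime, then the fixed-point subgroup C_G(R) is perfect. -/
/-- The subgroup of fixed points of an action `φ : R →* MulAut G`. -/
def fixedSubgroup {R G : Type*} [Group R] [Group G] (φ : R →* MulAut G) : Subgroup G where
  carrier := {g | ∀ r : R, φ r g = g}
  one_mem' := by intro r; simp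
  mul_mem' := by intro a b ha hb r; simp [map_mul, ha r, hb r]
  inv_mem' := by intro a ha r; simp [ha r]

/-!
Write `g ∈ C_G(R)` as a product `∏ᵢ cᵢ` with `cᵢ ∈ Gᵢ`. If `r ∈ R` maps `Gᵢ` onto `Gₖ`, then `g`
and `r g = g` act on `Gₖ` by conjugation as `cₖ` and `r cᵢ` do, so `r cᵢ ≡ cₖ` modulo `Z(G)`;
hence all the elements `r cᵢ` commute. Semiregularity makes the translates `r Gᵢ` pairwise
distinct, so `x ↦ ∏_r r x` is a homomorphism `Gᵢ → C_G(R)`, whose image lies in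
`[C_G(R), C_G(R)]` because `Gᵢ` is perfect. Regrouping the commuting factors,
`g ^ |R| = ∏_r r g = ∏ᵢ ∏_r r cᵢ ∈ [C_G(R), C_G(R)]`, and `|R|` is prime to `|G|`.
-/

open Finset Pointwise
open scoped Function

namespace Finset

variable {α β M : Type*} [Monoid M]

theorem noncommProd_univ_comp_equiv [Fintype α] (f : α → M) (e : α ≃ α) (comm comm') :
    univ.noncommProd (f ∘ e) comm = univ.noncommProd f comm' := by
  simp only [noncommProd, ← Multiset.map_map f e, Multiset.map_univ_val_equiv]

theorem noncommProd_noncommProd_comm (s : Finset α) (t : Finset β) (f : α → β → M)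
    (hf : ∀ a b a' b', Commute (f a b) (f a' b'))
    (comm₁ : ∀ a, (t : Set β).Pairwise (Commute on f a))
    (comm₂ : ∀ b, (s : Set α).Pairwise (Commute on fun a => f a b)) (comm comm') :
    s.noncommProd (fun a => t.noncommProd (f a) (comm₁ a)) comm =
      t.noncommProd (fun b => s.noncommProd (fun a => f a b) (comm₂ b)) comm' := by
  induction s using Finset.cons_induction_on with
  | empty =>
    rw [noncommProd_empty, noncommProd_eq_pow_card _ _ _ 1 fun _ _ => noncommProd_empty _ _,
      one_pow]
  | cons a s ha ih =>
    have comm₂' b := (comm₂ b).mono (subset_cons ha)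
    have hs : ∀ b a' b', Commute (s.noncommProd (fun a => f a b) (comm₂' b)) (f a' b') :=
      fun b a' b' => (noncommProd_commute _ _ _ _ fun _ _ => hf ..).symm
    rw [noncommProd_cons,
      ih comm₂' _ fun b _ b' _ _ => noncommProd_commute _ _ _ _ fun _ _ => hs ..]
    refine (noncommProd_mul_distrib (f a) (fun b => s.noncommProd (fun a => f a b) (comm₂' b))
      (comm₁ a) _ fun b _ b' _ _ => hs ..).symm.trans ?_
    exact noncommProd_congr rfl (fun b _ => (noncommProd_cons s a (fun a => f a b) ha _).symm) _

end Finset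

theorem MonoidHom.range_le_commutator_of_commutator_eq_top {K G : Type*} [Group K] [Group G]
    (f : K →* G) (hK : commutator K = ⊤) {C : Subgroup G} (hC : f.range ≤ C) :
    f.range ≤ ⁅C, C⁆ :=
  calc f.range = (commutator K).map f := by rw [hK, range_eq_map]
    _ = ⁅f.range, f.range⁆ := map_commutator_eq K f
    _ ≤ ⁅C, C⁆ := Subgroup.commutator_mono hC hC

namespace Subgroup

variable {G : Type*} [Group G]

theorem mem_of_pow_mem_of_coprime (H : Subgroup G) {n : ℕ} (hn : (Nat.card G).Coprime n) {g : G}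
    (hg : g ^ n ∈ H) : g ∈ H := by
  rw [← (powCoprime hn).left_inv g]
  exact zpow_mem hg _

theorem commutator_eq_top_of_commutator_eq_self {K : Subgroup G} (hK : ⁅K, K⁆ = K) :
    _root_.commutator K = ⊤ :=
  map_injective K.subtype_injective <| by
    rw [map_subtype_commutator, hK, ← MonoidHom.range_eq_map, range_subtype]

theorem mem_center_of_forall_commute {ι : Type*} {H : ι → Subgroup G} (hgen : ⨆ i, H i = ⊤)
    {z : G} (hz : ∀ i, ∀ x ∈ H i, Commute z x) : z ∈ center G := by
  have : ⊤ ≤ centralizer {z} := by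
    rw [← hgen]
    exact iSup_le fun i x hx => mem_centralizer_singleton_iff.mpr (hz i x hx).symm
  exact centralizer_eq_top_iff_subset.mp (top_le_iff.mp this) rfl

variable {ι : Type*} [Fintype ι] {H : ι → Subgroup G}
  (hcomm : Pairwise fun i j => ∀ x y : G, x ∈ H i → y ∈ H j → Commute x y)

theorem commute_inv_mul_noncommPiCoprod (c : ∀ i, H i) (i : ι) {x : G} (hx : x ∈ H i) :
    Commute ((c i : G)⁻¹ * noncommPiCoprod hcomm c) x := by
  classical
  have hc : (c i : G)⁻¹ * noncommPiCoprod hcomm c =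
      (univ.erase i).noncommProd (fun j => (c j : G))
        fun a _ b _ hab => hcomm hab _ _ (c a).2 (c b).2 := by
    rw [inv_mul_eq_iff_eq_mul, noncommPiCoprod_apply]
    exact (mul_noncommProd_erase _ (mem_univ i) _ _).symm
  rw [hc]
  exact (noncommProd_commute _ _ _ _ fun j hj =>
    hcomm (ne_of_mem_erase hj).symm x (c j) hx (c j).2).symm

theorem inv_mul_map_mem_center (hgen : ⨆ i, H i = ⊤) (c : ∀ i, H i) {f : G →* G} {i k : ι}
    (hf : (H i).map f = H k) (hfix : f (noncommPiCoprod hcomm c) = noncommPiCoprod hcomm c) :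
    (c k : G)⁻¹ * f (c i) ∈ center G := by
  have hfi : f (c i) ∈ H k := hf ▸ mem_map_of_mem f (c i).2
  refine mem_center_of_forall_commute hgen fun j y hy => ?_
  rcases eq_or_ne j k with rfl | hjk
  · obtain ⟨y, hy', rfl⟩ := hf ▸ hy
    have h₁ := commute_inv_mul_noncommPiCoprod hcomm c j (hf ▸ mem_map_of_mem f hy')
    have h₂ := (commute_inv_mul_noncommPiCoprod hcomm c i hy').map f
    rw [map_mul, map_inv, hfix] at h₂
    simpa [mul_assoc] using h₁.mul_left h₂.inv_left
  · exact (hcomm hjk y _ hy (mul_mem (inv_mem (c k).2) hfi)).symm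

theorem commute_map_components (hgen : ⨆ i, H i = ⊤) (c : ∀ i, H i) {f f' : G →* G}
    {i i' k k' : ι} (hf : (H i).map f = H k) (hf' : (H i').map f' = H k')
    (hfix : f (noncommPiCoprod hcomm c) = noncommPiCoprod hcomm c)
    (hfix' : f' (noncommPiCoprod hcomm c) = noncommPiCoprod hcomm c) :
    Commute (f (c i)) (f' (c i')) := by
  have hz := mem_center_iff.mp (inv_mul_map_mem_center hcomm hgen c hf hfix)
  have hz' := mem_center_iff.mp (inv_mul_map_mem_center hcomm hgen c hf' hfix')
  have hck : Commute (c k : G) (c k') := by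
    rcases eq_or_ne k k' with rfl | hkk
    · rfl
    · exact hcomm hkk _ _ (c k).2 (c k').2
  rw [← mul_inv_cancel_left (c k : G) (f (c i)), ← mul_inv_cancel_left (c k' : G) (f' (c i'))]
  exact (hck.mul_right (hz' _)).mul_left (hz _).symm

end Subgroup

section Action

variable {R G : Type*} [Group R] [Group G] (φ : R →* MulAut G)

theorem smul_ne_smul_of_ne {K : Subgroup G} (hK : ∀ r : R, r ≠ 1 → φ r • K ≠ K) {r s : R}
    (hrs : r ≠ s) : φ r • K ≠ φ s • K := by
  intro h
  apply hK (s⁻¹ * r) (by rwa [Ne, inv_mul_eq_one, eq_comm])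
  rw [map_mul, mul_smul, map_inv, inv_smul_eq_iff, h]

theorem pairwise_commute_apply {ι : Type*} {H : ι → Subgroup G}
    (hcomm : Pairwise fun i j => ∀ x y : G, x ∈ H i → y ∈ H j → Commute x y)
    (hperm : ∀ r i, ∃ j, φ r • H i = H j) (hsemireg : ∀ r : R, r ≠ 1 → ∀ i, φ r • H i ≠ H i)
    (i : ι) : Pairwise fun r s => ∀ x y : H i, Commute (φ r x) (φ s y) := by
  intro r s hrs x y
  obtain ⟨j, hj⟩ := hperm r i
  obtain ⟨k, hk⟩ := hperm s i
  have hjk : j ≠ k := by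
    rintro rfl
    exact smul_ne_smul_of_ne φ (fun r hr => hsemireg r hr i) hrs (hj.trans hk.symm)
  exact hcomm hjk _ _ (hj ▸ Subgroup.smul_mem_pointwise_smul _ _ _ x.2)
    (hk ▸ Subgroup.smul_mem_pointwise_smul _ _ _ y.2)

variable [Fintype R]

def actionNorm (K : Subgroup G) (hK : Pairwise fun r s => ∀ x y : K, Commute (φ r x) (φ s y)) :
    K →* G :=
  (MonoidHom.noncommPiCoprod (fun r => (φ r).toMonoidHom.comp K.subtype) hK).comp
    (Pi.constMonoidHom R K)

theorem actionNorm_apply (K : Subgroup G) (hK) (x : K) :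
    actionNorm φ K hK x = univ.noncommProd (fun r => φ r x) fun _ _ _ _ hrs => hK hrs x x :=
  MonoidHom.noncommPiCoprod_apply (hcomm := hK) _ _

theorem range_actionNorm_le_fixedSubgroup (K : Subgroup G) (hK) :
    (actionNorm φ K hK).range ≤ fixedSubgroup φ := by
  rintro _ ⟨x, rfl⟩ s
  rw [actionNorm_apply]
  refine (map_noncommProd _ _ _ (φ s)).trans <| (noncommProd_congr rfl (fun r _ => ?_) _).trans <|
    noncommProd_univ_comp_equiv (fun r => φ r x) (Equiv.mulLeft s) _ _
  simp [map_mul]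

theorem range_actionNorm_le_commutator (K : Subgroup G) (hK) (hperf : ⁅K, K⁆ = K) :
    (actionNorm φ K hK).range ≤ ⁅fixedSubgroup φ, fixedSubgroup φ⁆ :=
  MonoidHom.range_le_commutator_of_commutator_eq_top _
    (Subgroup.commutator_eq_top_of_commutator_eq_self hperf)
    (range_actionNorm_le_fixedSubgroup φ K hK)

theorem pow_card_mem_commutator_fixedSubgroup {ι : Type*} [Fintype ι] {H : ι → Subgroup G}
    (hcomm : Pairwise fun i j => ∀ x y : G, x ∈ H i → y ∈ H j → Commute x y)
    (hgen : ⨆ i, H i = ⊤) (hperf : ∀ i, ⁅H i, H i⁆ = H i) (hperm : ∀ r i, ∃ j, φ r • H i = H j)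
    (hsemireg : ∀ r : R, r ≠ 1 → ∀ i, φ r • H i ≠ H i) {g : G} (hg : g ∈ fixedSubgroup φ) :
    g ^ Nat.card R ∈ ⁅fixedSubgroup φ, fixedSubgroup φ⁆ := by
  obtain ⟨c, rfl⟩ : g ∈ (Subgroup.noncommPiCoprod hcomm).range := by
    rw [Subgroup.noncommPiCoprod_range, hgen]; trivial
  have hall r i s j : Commute (φ r (c i)) (φ s (c j)) :=
    Subgroup.commute_map_components hcomm hgen c (f := (φ r).toMonoidHom)
      (f' := (φ s).toMonoidHom) (hperm r i).choose_spec (hperm s j).choose_spec (hg r) (hg s)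
  have comm_row r : ((univ : Finset ι) : Set ι).Pairwise (Commute on fun i => φ r (c i)) :=
    fun _ _ _ _ _ => hall ..
  have comm_col i : ((univ : Finset R) : Set R).Pairwise (Commute on fun r => φ r (c i)) :=
    fun _ _ _ _ _ => hall ..
  have hrow r : univ.noncommProd _ (comm_row r) = Subgroup.noncommPiCoprod hcomm c := by
    rw [← hg r, Subgroup.noncommPiCoprod_apply]
    exact (map_noncommProd _ _ _ _).symm
  have hcol i : univ.noncommProd _ (comm_col i) ∈ ⁅fixedSubgroup φ, fixedSubgroup φ⁆ := by
    have := range_actionNorm_le_commutator φ (H i)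
      (pairwise_commute_apply φ hcomm hperm hsemireg i) (hperf i) ⟨c i, rfl⟩
    rwa [actionNorm_apply] at this
  have comm_rows : ((univ : Finset R) : Set R).Pairwise
      (Commute on fun r => univ.noncommProd _ (comm_row r)) := fun r _ s _ _ => by
    simp only [Function.onFun, hrow]; rfl
  have comm_cols : ((univ : Finset ι) : Set ι).Pairwise
      (Commute on fun i => univ.noncommProd _ (comm_col i)) := fun _ _ _ _ _ =>
    noncommProd_commute _ _ _ _ fun _ _ => (noncommProd_commute _ _ _ _ fun _ _ => hall ..).symm
  have hpow : Subgroup.noncommPiCoprod hcomm c ^ Nat.card R =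
      univ.noncommProd (fun r => univ.noncommProd _ (comm_row r)) comm_rows := by
    rw [noncommProd_eq_pow_card _ _ _ _ fun r _ => hrow r, card_univ, Nat.card_eq_fintype_card]
  rw [hpow, noncommProd_noncommProd_comm _ _ _ (fun _ _ _ _ => hall ..) _ comm_col _ comm_cols]
  exact Subgroup.noncommProd_mem _ _ fun i _ => hcol i

end Action

theorem stmt0_general {R G : Type*} [Group R] [Group G] [Finite R]
    (φ : R →* MulAut G) (n : ℕ) (Gs : Fin n → Subgroup G)
    (hperf : ∀ i, ⁅Gs i, Gs i⁆ = Gs i)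
    (hcomm : ∀ i j, i ≠ j → ∀ x ∈ Gs i, ∀ y ∈ Gs j, Commute x y)
    (hgen : (⨆ i, Gs i) = ⊤)
    (hperm : ∀ (r : R) (i : Fin n), ∃ j, (Gs i).map (φ r).toMonoidHom = Gs j)
    (hsemireg : ∀ r : R, r ≠ 1 → ∀ i, (Gs i).map (φ r).toMonoidHom ≠ Gs i)
    (hcop : Nat.Coprime (Nat.card R) (Nat.card G)) :
    ⁅fixedSubgroup φ, fixedSubgroup φ⁆ = fixedSubgroup φ := by
  have := Fintype.ofFinite R
  refine le_antisymm (Subgroup.commutator_le_self _) fun g hg => ?_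
  exact Subgroup.mem_of_pow_mem_of_coprime _ hcop.symm <|
    pow_card_mem_commutator_fixedSubgroup φ (fun i j hij x y hx hy => hcomm i j hij x hx y hy)
      hgen hperf hperm hsemireg hg

theorem stmt0 {R G : Type*} [Group R] [Group G] [Finite R] [Finite G]
    (φ : R →* MulAut G) (n : ℕ) (Gs : Fin n → Subgroup G)
    (hperf : ∀ i, ⁅Gs i, Gs i⁆ = Gs i)
    (hcomm : ∀ i j, i ≠ j → ∀ x ∈ Gs i, ∀ y ∈ Gs j, Commute x y)
    (hgen : (⨆ i, Gs i) = ⊤)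
    (hperm : ∀ (r : R) (i : Fin n), ∃ j, (Gs i).map (φ r).toMonoidHom = Gs j)
    (hsemireg : ∀ r : R, r ≠ 1 → ∀ i, (Gs i).map (φ r).toMonoidHom ≠ Gs i)
    (hcop : Nat.Coprime (Nat.card R) (Nat.card G)) :
    ⁅fixedSubgroup φ, fixedSubgroup φ⁆ = fixedSubgroup φ :=
  stmt0_general φ n Gs hperf hcomm hgen hperm hsemireg hcop
end

section
/- If G is a perfect group such that the quotient G/Z(G) is a finite group of order coprime to a prime r, then G itself is a finite group of order coprime to r. -/
/-!
Commutators only depend on cosets of the centre, so a finite `G ⧸ Z(G)` leaves finitely many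
commutators, and Schur's theorem makes `[G, G] = G` finite. The transfer `G → Z(G)`,
`g ↦ g ^ [G : Z(G)]`, is a homomorphism to an abelian group, hence trivial on the perfect
group `G`; so the exponent of `G` divides `[G : Z(G)]`, and by Cauchy no prime dividing `|G|`
can be coprime to the index.
-/

open Subgroup

open scoped commutatorElement IsMulCommutative

section

variable {G : Type*} [Group G]

theorem commutatorElement_mul_mem_center_mul_mem_center (g h : G) {z w : G}
    (hz : z ∈ center G) (hw : w ∈ center G) : ⁅g * z, h * w⁆ = ⁅g, h⁆ := by
  rw [mem_center_iff] at hz hw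
  simp only [commutatorElement_def, mul_inv_rev]
  calc g * z * (h * w) * (z⁻¹ * g⁻¹) * (w⁻¹ * h⁻¹)
      = g * (z * (h * w)) * z⁻¹ * g⁻¹ * (w⁻¹ * h⁻¹) := by group
    _ = g * h * (w * g⁻¹) * w⁻¹ * h⁻¹ := by rw [← hz]; group
    _ = g * h * g⁻¹ * h⁻¹ := by rw [← hw]; group

theorem finite_commutatorSet_of_finite_quotient_center [Finite (G ⧸ center G)] :
    Finite (commutatorSet G) := by
  refine Set.Finite.subset (Set.finite_range fun q : (G ⧸ center G) × (G ⧸ center G) ↦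
    ⁅q.1.out, q.2.out⁆) ?_
  rintro _ ⟨g, h, rfl⟩
  obtain ⟨z, hz⟩ := QuotientGroup.mk_out_eq_mul (center G) g
  obtain ⟨w, hw⟩ := QuotientGroup.mk_out_eq_mul (center G) h
  exact ⟨(g, h), by
    simp only [hz, hw, commutatorElement_mul_mem_center_mul_mem_center g h z.2 w.2]⟩

theorem finite_of_commutator_eq_top [Finite (G ⧸ center G)] (hG : commutator G = ⊤) :
    Finite G := by
  have := finite_commutatorSet_of_finite_quotient_center (G := G)
  have : Finite (⊤ : Subgroup G) := hG ▸ inferInstanceAs (Finite (commutator G))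
  exact .of_equiv _ topEquiv.toEquiv

theorem pow_index_center_eq_one_of_commutator_eq_top [FiniteIndex (center G)]
    (hG : commutator G = ⊤) (g : G) : g ^ (center G).index = 1 := by
  have hker : commutator G ≤ (MonoidHom.transferCenterPow G).ker :=
    Abelianization.commutator_subset_ker _
  rw [hG, top_le_iff] at hker
  have : MonoidHom.transferCenterPow G g = 1 := by rw [← MonoidHom.mem_ker, hker]; trivial
  simpa using congrArg Subtype.val this

end

theorem Nat.Coprime.card_of_forall_pow_eq_one {G : Type*} [Group G] [Finite G] {n r : ℕ}
    (hr : r.Prime) (hn : n.Coprime r) (hG : ∀ g : G, g ^ n = 1) : (Nat.card G).Coprime r := by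
  have := Fact.mk hr
  refine (Nat.coprime_comm.trans hr.coprime_iff_not_dvd).mpr fun hdvd ↦ hr.one_lt.ne' ?_
  obtain ⟨g, hg⟩ := exists_prime_orderOf_dvd_card' r hdvd
  exact Nat.eq_one_of_dvd_coprimes hn (hg ▸ orderOf_dvd_of_pow_eq_one (hG g)) dvd_rfl

theorem stmt1 {G : Type*} [Group G] (r : ℕ) (hr : r.Prime)
    (hperf : commutator G = ⊤)
    (hfin : Finite (G ⧸ Subgroup.center G))
    (hcop : Nat.Coprime (Nat.card (G ⧸ Subgroup.center G)) r) :
    Finite G ∧ Nat.Coprime (Nat.card G) r := by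
  have := finiteIndex_of_finite_quotient (H := center G)
  have hG : Finite G := finite_of_commutator_eq_top hperf
  exact ⟨hG, hcop.card_of_forall_pow_eq_one hr
    (pow_index_center_eq_one_of_commutator_eq_top hperf)⟩
end

section
/- Let R be a finite group acting on a finite group G with gcd(|R|,|G|) = 1, and suppose G = G₁ × ⋯ × Gₙ is a direct product of subgroups permuted by R. Then the natural projection from the fixed points of R on the external direct product to G maps C onto C_G(R); in particular, if R permutes the factors semiregularly, C_G(R) is isomorphic to the direct product of the diagonal subgroups over the R-orbits. -/
/-!
Write `e : ∏ᵢ Gᵢ → G` for the multiplication map, an isomorphism by hypothesis. Since `φ r` carries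
`Gᵢ` onto `G_{r • i}`, conjugating `φ r` by `e` gives the automorphism of the external product
that applies `φ r` coordinatewise and moves coordinate `i` to `r • i`. Hence `g` is fixed by `R`
exactly when its coordinates form an equivariant family, `φ r (fᵢ) = f_{r • i}`. When `R` acts
freely on the indices, such a family is determined by its values at one representative of each
orbit, and these values can be prescribed arbitrarily.
-/

open MulAction

section

variable {R G ι : Type*} [Group R] [Group G] [MulAction R ι]

theorem eq_of_smul_eq_smul_of_free (hfree : ∀ r : R, r ≠ 1 → ∀ i : ι, r • i ≠ i)
    {r r' : R} {i : ι} (h : r • i = r' • i) : r = r' := by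
  by_contra hne
  refine hfree (r'⁻¹ * r) (fun h1 => hne (inv_mul_eq_one.mp h1).symm) i ?_
  rw [mul_smul, h, inv_smul_smul]

variable (R) in
theorem exists_smul_out_eq (i : ι) :
    ∃ r : R, r • (⟦i⟧ : orbitRel.Quotient R ι).out = i :=
  (orbitRel R ι).symm (Quotient.mk_out (s := orbitRel R ι) i)

variable (φ : R →* MulAut G) (Gs : ι → Subgroup G)

def equivariantFamilies : Subgroup ((i : ι) → Gs i) where
  carrier := {f | ∀ (r : R) (i : ι), φ r (f i : G) = f (r • i)}
  one_mem' := by simp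
  mul_mem' := by
    intro f f' hf hf' r i
    simp [hf r i, hf' r i]
  inv_mem' := by
    intro f hf r i
    simp [hf r i]

noncomputable def restrictToOrbitReps :
    equivariantFamilies φ Gs →* ((o : orbitRel.Quotient R ι) → Gs o.out) where
  toFun f o := (f : (i : ι) → Gs i) o.out
  map_one' := rfl
  map_mul' _ _ := rfl

variable {φ Gs}

theorem coe_apply_eq_of_smul_eq {f : (i : ι) → Gs i} (hf : f ∈ equivariantFamilies φ Gs)
    {r : R} {i j : ι} (hr : r • j = i) : (f i : G) = φ r (f j) := by
  subst hr
  exact (hf r j).symm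

theorem restrictToOrbitReps_injective : Function.Injective (restrictToOrbitReps φ Gs) := by
  intro f f' h
  ext i : 3
  obtain ⟨r, hr⟩ := exists_smul_out_eq R i
  rw [coe_apply_eq_of_smul_eq f.2 hr, coe_apply_eq_of_smul_eq f'.2 hr]
  exact congrArg (fun x => φ r (x ⟦i⟧ : G)) h

section Permuted

variable (hperm : ∀ (r : R) (i : ι), (Gs i).map (φ r).toMonoidHom = Gs (r • i))
include hperm

theorem map_mem_of_mem {r : R} {i : ι} {g : G} (hg : g ∈ Gs i) : φ r g ∈ Gs (r • i) :=
  hperm r i ▸ ⟨g, hg, rfl⟩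

theorem restrictToOrbitReps_surjective (hfree : ∀ r : R, r ≠ 1 → ∀ i : ι, r • i ≠ i) :
    Function.Surjective (restrictToOrbitReps φ Gs) := by
  intro x
  choose rep hrep using exists_smul_out_eq (ι := ι) R
  have hrep_smul (s : R) (i : ι) : rep (s • i) = s * rep i := by
    refine eq_of_smul_eq_smul_of_free hfree (i := (⟦i⟧ : orbitRel.Quotient R ι).out) ?_
    have h := hrep (s • i)
    rw [orbitRel.Quotient.quotient_smul_eq] at h
    rw [h, mul_smul, hrep]
  have hrep_out (o : orbitRel.Quotient R ι) : rep o.out = 1 := by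
    refine eq_of_smul_eq_smul_of_free hfree (i := o.out) ?_
    have h := hrep o.out
    rw [Quotient.out_eq] at h
    rw [h, one_smul]
  let f : (i : ι) → Gs i := fun i =>
    ⟨φ (rep i) (x ⟦i⟧), by simpa only [hrep] using map_mem_of_mem hperm (r := rep i) (x ⟦i⟧).2⟩
  have hf : f ∈ equivariantFamilies φ Gs := by
    intro s i
    change φ s (φ (rep i) (x ⟦i⟧)) = φ (rep (s • i)) (x ⟦s • i⟧)
    rw [hrep_smul, orbitRel.Quotient.quotient_smul_eq, map_mul, MulAut.mul_apply]
  refine ⟨⟨f, hf⟩, funext fun o => Subtype.ext ?_⟩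
  change φ (rep o.out) (x ⟦o.out⟧) = x o
  rw [hrep_out, map_one, MulAut.one_apply, Quotient.out_eq]

def permuteFactors (r : R) : ((i : ι) → Gs i) →* ((i : ι) → Gs i) where
  toFun f j := ⟨φ r (f (r⁻¹ • j)), by
    simpa using map_mem_of_mem hperm (r := r) (f (r⁻¹ • j)).2⟩
  map_one' := by
    funext j
    simp
  map_mul' f f' := by
    funext j
    simp

theorem permuteFactors_apply_coe (r : R) (f : (i : ι) → Gs i) (j : ι) :
    (permuteFactors hperm r f j : G) = φ r (f (r⁻¹ • j)) := rfl

theorem permuteFactors_mulSingle [DecidableEq ι] (r : R) (i : ι) (y : Gs i) :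
    permuteFactors hperm r (Pi.mulSingle i y) =
      Pi.mulSingle (r • i) ⟨φ r y, map_mem_of_mem hperm y.2⟩ := by
  funext j
  apply Subtype.ext
  rw [permuteFactors_apply_coe]
  obtain rfl | hj := eq_or_ne j (r • i)
  · rw [inv_smul_smul, Pi.mulSingle_eq_same, Pi.mulSingle_eq_same]
  · have hne : r⁻¹ • j ≠ i := fun h => hj (h ▸ (smul_inv_smul r j).symm)
    simp [Pi.mulSingle_eq_of_ne hne, Pi.mulSingle_eq_of_ne hj]

theorem permuteFactors_eq_self_iff (r : R) (f : (i : ι) → Gs i) :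
    permuteFactors hperm r f = f ↔ ∀ i, φ r (f i : G) = f (r • i) := by
  constructor
  · intro h i
    have hi := congrArg Subtype.val (congrFun h (r • i))
    rwa [permuteFactors_apply_coe, inv_smul_smul] at hi
  · intro h
    funext j
    apply Subtype.ext
    rw [permuteFactors_apply_coe, h, smul_inv_smul]

variable [Fintype ι] [DecidableEq ι]
  (hcomm : Pairwise fun i j => ∀ (x : Gs i) (y : Gs j), Commute ((Gs i).subtype x) ((Gs j).subtype y))

theorem noncommPiCoprod_permuteFactors (r : R) (f : (i : ι) → Gs i) :
    MonoidHom.noncommPiCoprod (fun i => (Gs i).subtype) hcomm (permuteFactors hperm r f) =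
      φ r (MonoidHom.noncommPiCoprod (fun i => (Gs i).subtype) hcomm f) := by
  suffices h : (MonoidHom.noncommPiCoprod (fun i => (Gs i).subtype) hcomm).comp
      (permuteFactors hperm r) =
      (φ r).toMonoidHom.comp (MonoidHom.noncommPiCoprod (fun i => (Gs i).subtype) hcomm) from
    DFunLike.congr_fun h f
  refine MonoidHom.pi_ext fun i y => ?_
  simp [permuteFactors_mulSingle]

theorem noncommPiCoprod_mem_fixedSubgroup_iff
    (hinj : Function.Injective (MonoidHom.noncommPiCoprod (fun i => (Gs i).subtype) hcomm))
    (f : (i : ι) → Gs i) :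
    MonoidHom.noncommPiCoprod (fun i => (Gs i).subtype) hcomm f ∈ fixedSubgroup φ ↔
      f ∈ equivariantFamilies φ Gs := by
  refine forall_congr' fun r => ?_
  rw [← permuteFactors_eq_self_iff hperm, ← noncommPiCoprod_permuteFactors hperm hcomm,
    hinj.eq_iff]

theorem map_equivariantFamilies_eq_fixedSubgroup
    (hprod : Function.Bijective (MonoidHom.noncommPiCoprod (fun i => (Gs i).subtype) hcomm)) :
    (equivariantFamilies φ Gs).map (MonoidHom.noncommPiCoprod (fun i => (Gs i).subtype) hcomm) =
      fixedSubgroup φ := by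
  ext g
  obtain ⟨f, rfl⟩ := hprod.2 g
  rw [Subgroup.mem_map_iff_mem hprod.1, noncommPiCoprod_mem_fixedSubgroup_iff hperm hcomm hprod.1]

end Permuted

end

theorem stmt2_general {R G : Type*} [Group R] [Group G]
    (φ : R →* MulAut G)
    (n : ℕ) (Gs : Fin n → Subgroup G)
    (hcomm : Pairwise fun i j => ∀ (x : (Gs i)) (y : (Gs j)),
      Commute ((Gs i).subtype x) ((Gs j).subtype y))
    (hprod : Function.Bijective
      (MonoidHom.noncommPiCoprod (fun i => (Gs i).subtype) hcomm))
    (σ : R →* Equiv.Perm (Fin n))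
    (hperm : ∀ (r : R) (i : Fin n), (Gs i).map (φ r).toMonoidHom = Gs (σ r i)) :
    (∀ g ∈ fixedSubgroup φ, ∃ f : ∀ i, Gs i,
        MonoidHom.noncommPiCoprod (fun i => (Gs i).subtype) hcomm f = g ∧
        ∀ (r : R) (i : Fin n), φ r ((f i : G)) = ((f (σ r i) : G))) ∧
    ((∀ r : R, r ≠ 1 → ∀ i, σ r i ≠ i) →
      letI : MulAction R (Fin n) := MulAction.compHom (Fin n) σ
      Nonempty ((fixedSubgroup φ) ≃*
        ((o : Quotient (MulAction.orbitRel R (Fin n))) → Gs o.out))) := by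
  let _ : MulAction R (Fin n) := MulAction.compHom (Fin n) σ
  have hmap := map_equivariantFamilies_eq_fixedSubgroup (Gs := Gs) hperm hcomm hprod
  refine ⟨fun g hg => ?_, fun hfree => ?_⟩
  · obtain ⟨f, hf, rfl⟩ := Subgroup.mem_map.mp (hmap ▸ hg)
    exact ⟨f, rfl, hf⟩
  · exact ⟨(MulEquiv.subgroupCongr hmap).symm.trans <|
      (Subgroup.equivMapOfInjective _ _ hprod.1).symm.trans <|
      MulEquiv.ofBijective (restrictToOrbitReps φ Gs)
        ⟨restrictToOrbitReps_injective, restrictToOrbitReps_surjective hperm hfree⟩⟩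

theorem stmt2 {R G : Type*} [Group R] [Group G] [Finite R] [Finite G]
    (φ : R →* MulAut G) (hcop : Nat.Coprime (Nat.card R) (Nat.card G))
    (n : ℕ) (Gs : Fin n → Subgroup G)
    (hcomm : Pairwise fun i j => ∀ (x : (Gs i)) (y : (Gs j)),
      Commute ((Gs i).subtype x) ((Gs j).subtype y))
    (hprod : Function.Bijective
      (MonoidHom.noncommPiCoprod (fun i => (Gs i).subtype) hcomm))
    (σ : R →* Equiv.Perm (Fin n))
    (hperm : ∀ (r : R) (i : Fin n), (Gs i).map (φ r).toMonoidHom = Gs (σ r i)) :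
    (∀ g ∈ fixedSubgroup φ, ∃ f : ∀ i, Gs i,
        MonoidHom.noncommPiCoprod (fun i => (Gs i).subtype) hcomm f = g ∧
        ∀ (r : R) (i : Fin n), φ r ((f i : G)) = ((f (σ r i) : G))) ∧
    ((∀ r : R, r ≠ 1 → ∀ i, σ r i ≠ i) →
      letI : MulAction R (Fin n) := MulAction.compHom (Fin n) σ
      Nonempty ((fixedSubgroup φ) ≃*
        ((o : Quotient (MulAction.orbitRel R (Fin n))) → Gs o.out))) :=
  stmt2_general φ n Gs hcomm hprod σ hperm
end

section
/- Let r be a prime, A an elementary abelian r-group acting on a finite r'-group G that is a direct product of nonabelian simple subgroups K₁,…,Kₙ permuted transitively by A, with C_A(G) = ⟨a₀⟩ of order r. If the Sylow r-subgroups of Aut(K₁) are cyclic, then the kernel A_∞ = ker(A → Sym({K₁,…,Kₙ})) has order at most r². -/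
/-!
Restricting to the first factor gives a homomorphism `A_∞ → Aut K₁`. Its image has exponent `r`,
so it lies in a cyclic Sylow `r`-subgroup and has order at most `r`. An element of its kernel
centralises `K₁`; as `A` is abelian and transitive on the factors, it then centralises every
factor, hence all of `G`, so the kernel lies in `C_A(G) = ⟨a₀⟩`, of order `r`.
-/

open Pointwise

section
variable {G : Type*} [Group G]

def MulAut.restrictStabilizer (H : Subgroup G) :
    MulAction.stabilizer (MulAut G) H →* MulAut H where
  toFun e := (MulEquiv.subgroupMap e.1 H).trans (MulEquiv.subgroupCongr e.2)
  map_one' := by ext; rfl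
  map_mul' _ _ := by ext; rfl

lemma MulAut.eq_one_of_forall_apply_eq_self {ι : Type*} {Ks : ι → Subgroup G}
    (htop : ⨆ i, Ks i = ⊤) {e : MulAut G} (he : ∀ i, ∀ x ∈ Ks i, e x = x) : e = 1 := by
  have hle : ⨆ i, Ks i ≤ e.toMonoidHom.eqLocus (MonoidHom.id G) := iSup_le he
  ext x
  exact (htop ▸ hle) (Subgroup.mem_top x)

lemma MulAut.apply_eq_self_of_mem_map {e f : MulAut G} (hef : Commute e f) {H : Subgroup G}
    (he : ∀ x ∈ H, e x = x) : ∀ y ∈ H.map f.toMonoidHom, e y = y := by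
  rintro _ ⟨x, hx, rfl⟩
  change (e * f) x = f x
  rw [hef.eq, MulAut.mul_apply, he x hx]

lemma iSup_eq_top_of_surjective_noncommPiCoprod {ι : Type*} [Fintype ι] {Ks : ι → Subgroup G}
    {hcomm : Pairwise fun i j => ∀ (x : Ks i) (y : Ks j),
      Commute ((Ks i).subtype x) ((Ks j).subtype y)}
    (hsurj : Function.Surjective (MonoidHom.noncommPiCoprod (fun i => (Ks i).subtype) hcomm)) :
    ⨆ i, Ks i = ⊤ := by
  simpa [MonoidHom.noncommPiCoprod_range] using MonoidHom.range_eq_top.mpr hsurj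

lemma Subgroup.card_le_of_forall_pow_eq_one_of_isCyclic_sylow {p : ℕ} [hp : Fact p.Prime]
    (hsyl : ∀ P : Sylow p G, IsCyclic P) (H : Subgroup G) (hH : ∀ x ∈ H, x ^ p = 1) :
    Nat.card H ≤ p := by
  have hpow : ∀ x : H, x ^ p = 1 := fun x => Subtype.ext (hH x x.2)
  obtain ⟨P, hP⟩ := IsPGroup.exists_le_sylow (p := p) fun x => ⟨1, by rw [pow_one, hpow]⟩
  have : IsCyclic P := hsyl P
  have : IsCyclic H := Subgroup.isCyclic_of_le hP
  refine Nat.le_of_dvd hp.out.pos ?_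
  rw [← IsCyclic.exponent_eq_card]
  exact Monoid.exponent_dvd_of_forall_pow_eq_one hpow

end

lemma MonoidHom.card_le_mul_of_card_range_le_of_card_ker_le {G H : Type*} [Group G] [Group H]
    (f : G →* H) {m k : ℕ} (hrange : Nat.card f.range ≤ m) (hker : Nat.card f.ker ≤ k) :
    Nat.card G ≤ m * k := by
  rw [← f.ker.card_mul_index, Subgroup.index_ker f, mul_comm]
  exact Nat.mul_le_mul hrange hker

lemma fixingSubgroup_le_stabilizer {M α : Type*} [Group M] [MulAction M α] {s : Set α} {a : α}
    (ha : a ∈ s) : fixingSubgroup M s ≤ MulAction.stabilizer M a :=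
  fun _ hm => (mem_fixingSubgroup_iff M).1 hm a ha

section
variable {A G ι : Type*} [Group G]

/-- The kernel `A_∞` of the permutation action of `A` on the factors. -/
def factorKernel [Group A] (φ : A →* MulAut G) (Ks : ι → Subgroup G) : Subgroup A :=
  (fixingSubgroup (MulAut G) (Set.range Ks)).comap φ

lemma mem_factorKernel_iff [Group A] {φ : A →* MulAut G} {Ks : ι → Subgroup G} {a : A} :
    a ∈ factorKernel φ Ks ↔ ∀ i, (Ks i).map (φ a).toMonoidHom = Ks i := by
  simp only [factorKernel, Subgroup.mem_comap, mem_fixingSubgroup_iff, Set.forall_mem_range]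
  rfl

def factorKernel.restrict [Group A] (φ : A →* MulAut G) (Ks : ι → Subgroup G) (i : ι) :
    factorKernel φ Ks →* MulAut (Ks i) :=
  (MulAut.restrictStabilizer (Ks i)).comp <|
    (Subgroup.inclusion (fixingSubgroup_le_stabilizer (Set.mem_range_self i))).comp
      (φ.subgroupComap _)

variable [CommGroup A] {φ : A →* MulAut G} {Ks : ι → Subgroup G} {i : ι}

lemma factorKernel.map_eq_one_of_restrict_eq_one
    (htrans : ∀ j, ∃ b : A, (Ks i).map (φ b).toMonoidHom = Ks j) (htop : ⨆ j, Ks j = ⊤)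
    {a : factorKernel φ Ks} (ha : factorKernel.restrict φ Ks i a = 1) : φ a = 1 := by
  have hfix : ∀ x ∈ Ks i, φ a x = x := fun x hx =>
    congrArg Subtype.val (DFunLike.congr_fun ha ⟨x, hx⟩ :)
  refine MulAut.eq_one_of_forall_apply_eq_self htop fun j => ?_
  obtain ⟨b, hb⟩ := htrans j
  exact hb ▸ MulAut.apply_eq_self_of_mem_map ((Commute.all (a : A) b).map φ) hfix

lemma factorKernel.card_ker_restrict_le [Finite φ.ker]
    (htrans : ∀ j, ∃ b : A, (Ks i).map (φ b).toMonoidHom = Ks j) (htop : ⨆ j, Ks j = ⊤) :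
    Nat.card (factorKernel.restrict φ Ks i).ker ≤ Nat.card φ.ker := by
  rw [← Subgroup.card_map_of_injective (Subgroup.subtype_injective (factorKernel φ Ks))]
  refine Subgroup.card_le_of_le ?_
  rintro _ ⟨a, ha, rfl⟩
  exact map_eq_one_of_restrict_eq_one htrans htop ha

end

theorem stmt5_general {A G : Type*} [CommGroup A] [Group G]
    (r : ℕ) (hr : r.Prime) (hA : ∀ x : A, x ^ r = 1)
    (φ : A →* MulAut G) (n : ℕ) (hn : 0 < n) (Ks : Fin n → Subgroup G)
    (hcomm : Pairwise fun i j => ∀ (x : (Ks i)) (y : (Ks j)),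
      Commute ((Ks i).subtype x) ((Ks j).subtype y))
    (hprod : Function.Bijective
      (MonoidHom.noncommPiCoprod (fun i => (Ks i).subtype) hcomm))
    (htrans : ∀ i j : Fin n, ∃ a : A, (Ks i).map (φ a).toMonoidHom = Ks j)
    (a₀ : A) (ha₀ : orderOf a₀ = r) (hker : φ.ker = Subgroup.zpowers a₀)
    (hsyl : ∀ P : Sylow r (MulAut (Ks ⟨0, hn⟩)), IsCyclic P) :
    Nat.card {a : A // ∀ i, (Ks i).map (φ a).toMonoidHom = Ks i} ≤ r ^ 2 := by
  have : Fact r.Prime := ⟨hr⟩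
  have htop := iSup_eq_top_of_surjective_noncommPiCoprod hprod.surjective
  have : Finite φ.ker :=
    hker ▸ (isOfFinOrder_iff_pow_eq_one.2 ⟨r, hr.pos, ha₀ ▸ pow_orderOf_eq_one a₀⟩).finite_zpowers
  have hcard_ker : Nat.card φ.ker = r := by rw [hker, Nat.card_zpowers, ha₀]
  set ψ := factorKernel.restrict φ Ks ⟨0, hn⟩
  have hrange : Nat.card ψ.range ≤ r :=
    ψ.range.card_le_of_forall_pow_eq_one_of_isCyclic_sylow hsyl <| by
      rintro _ ⟨a, rfl⟩
      rw [← map_pow, show a ^ r = 1 from Subtype.ext (hA a), map_one]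
  calc Nat.card {a : A // ∀ i, (Ks i).map (φ a).toMonoidHom = Ks i}
      = Nat.card (factorKernel φ Ks) :=
        Nat.card_congr (Equiv.subtypeEquivRight fun _ => mem_factorKernel_iff.symm)
    _ ≤ r * r := ψ.card_le_mul_of_card_range_le_of_card_ker_le hrange
        (hcard_ker ▸ factorKernel.card_ker_restrict_le (htrans _) htop)
    _ = r ^ 2 := (sq r).symm

theorem stmt5 {A G : Type*} [CommGroup A] [Group G] [Finite G]
    (r : ℕ) (hr : r.Prime) (hA : ∀ x : A, x ^ r = 1)
    (hG : ¬ r ∣ Nat.card G)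
    (φ : A →* MulAut G) (n : ℕ) (hn : 0 < n) (Ks : Fin n → Subgroup G)
    (hsimple : ∀ i, IsSimpleGroup (Ks i))
    (hnonab : ∀ i, ¬ ∀ x y : (Ks i), x * y = y * x)
    (hcomm : Pairwise fun i j => ∀ (x : (Ks i)) (y : (Ks j)),
      Commute ((Ks i).subtype x) ((Ks j).subtype y))
    (hprod : Function.Bijective
      (MonoidHom.noncommPiCoprod (fun i => (Ks i).subtype) hcomm))
    (hperm : ∀ (a : A) (i : Fin n), ∃ j, (Ks i).map (φ a).toMonoidHom = Ks j)
    (htrans : ∀ i j : Fin n, ∃ a : A, (Ks i).map (φ a).toMonoidHom = Ks j)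
    (a₀ : A) (ha₀ : orderOf a₀ = r) (hker : φ.ker = Subgroup.zpowers a₀)
    (hsyl : ∀ P : Sylow r (MulAut (Ks ⟨0, hn⟩)), IsCyclic P) :
    Nat.card {a : A // ∀ i, (Ks i).map (φ a).toMonoidHom = Ks i} ≤ r ^ 2 :=
  stmt5_general r hr hA φ n hn Ks hcomm hprod htrans a₀ ha₀ hker hsyl
end

section
/- Let A be a finite noncyclic abelian r-group acting on a finite r'-group G. Then G is generated by the fixed-point subgroups C_G(a) as a ranges over the nonidentity elements of A; more precisely, G = ⟨C_G(a) : a ∈ A, a ≠ 1⟩. -/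
/-!
Fix `a, b ∈ A` of order `r` with `a ∉ ⟨b⟩` and let `H` be the subgroup generated by the
`C_G(c)`, `c ≠ 1`. If `G` is abelian, the norms of `g` over the `r + 1` subgroups of order `r`
of `⟨a, b⟩` lie in `H`, and their product is `g ^ r` times the norm over all of `⟨a, b⟩`, which
is fixed by `b`; as `r` is prime to `|G|`, `g ∈ H`.

By coprimality, fixed points of `A` on an `A`-invariant quotient `G/N` lift to `G`, so the claim
for `N` and for `G/N` gives it for `G`; for a `q`-group `G` this is an induction through the
centre. In general `A` permutes the Sylow `q`-subgroups of `G`, whose number is prime to `r`, so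
it normalises one of them, `Q`, and `Q ≤ H`. As this holds for every prime `q`, `H = G`.
-/

/-- The subgroup of fixed points of a single automorphism. -/
def fixedBy {G : Type*} [Group G] (e : MulAut G) : Subgroup G where
  carrier := {g | e g = g}
  one_mem' := by simp
  mul_mem' := by intro a b ha hb; simp only [Set.mem_setOf_eq] at *; simp [map_mul, ha, hb]
  inv_mem' := by intro a ha; simp only [Set.mem_setOf_eq] at *; simp [ha]

section Generation

variable {A G : Type*} [Group A] [Group G]

lemma mem_fixedBy {e : MulAut G} {x : G} : x ∈ fixedBy e ↔ e x = x := Iff.rfl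

def fixedBySup (φ : A →* MulAut G) : Subgroup G :=
  ⨆ a ∈ {a : A | a ≠ 1}, fixedBy (φ a)

lemma fixedBy_le_fixedBySup (φ : A →* MulAut G) {a : A} (ha : a ≠ 1) :
    fixedBy (φ a) ≤ fixedBySup φ :=
  le_iSup₂ (f := fun a (_ : a ∈ {a : A | a ≠ 1}) => fixedBy (φ a)) a ha

lemma fixedBySup_le_iff {φ : A →* MulAut G} {H : Subgroup G} :
    fixedBySup φ ≤ H ↔ ∀ a, a ≠ 1 → fixedBy (φ a) ≤ H :=
  iSup₂_le_iff

lemma map_fixedBySup_le {G' : Type*} [Group G'] (φ' : A →* MulAut G') (φ : A →* MulAut G)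
    (f : G' →* G) (hf : ∀ a x, f (φ' a x) = φ a (f x)) :
    (fixedBySup φ').map f ≤ fixedBySup φ := by
  refine Subgroup.map_le_iff_le_comap.mpr (fixedBySup_le_iff.mpr fun a ha x hx => ?_)
  exact fixedBy_le_fixedBySup φ ha (by rw [mem_fixedBy, ← hf, hx])

end Generation

lemma IsPGroup.exists_mem_forall_smul_eq {P α : Type*} [Group P] [MulAction P α] {p : ℕ}
    [Fact p.Prime] (hP : IsPGroup p P) (s : Set α) (hs : ∀ g : P, ∀ x ∈ s, g • x ∈ s)
    (hps : ¬ p ∣ Nat.card s) : ∃ x ∈ s, ∀ g : P, g • x = x := by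
  let t : SubMulAction P α := ⟨s, fun g {x} hx => hs g x hx⟩
  obtain ⟨⟨x, hx⟩, hfix⟩ := hP.nonempty_fixed_point_of_prime_not_dvd_card t hps
  exact ⟨x, hx, fun g => congrArg Subtype.val (hfix g)⟩

section InvariantSubgroup

variable {A G : Type*} [Group A] [Group G]
  (φ : A →* MulAut G) (N : Subgroup G) (hN : ∀ a, ∀ x ∈ N, φ a x ∈ N)

def restrictMulAut : A →* MulAut N :=
  letI : MulDistribMulAction A N :=
    { smul a x := ⟨φ a x, hN a x x.2⟩
      one_smul x := Subtype.ext (show φ 1 x = x by simp)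
      mul_smul a b x := Subtype.ext (show φ (a * b) x = φ a (φ b x) by simp)
      smul_mul _ _ _ := Subtype.ext (map_mul _ _ _)
      smul_one _ := Subtype.ext (map_one _) }
  MulDistribMulAction.toMulAut A N

def quotientMulAut [N.Normal] : A →* MulAut (G ⧸ N) :=
  letI : MulDistribMulAction A (G ⧸ N) :=
    { smul a := QuotientGroup.map N N (φ a).toMonoidHom (hN a ·)
      one_smul x := QuotientGroup.induction_on x fun g =>
        show ((φ 1 g : G) : G ⧸ N) = g by simp
      mul_smul a b x := QuotientGroup.induction_on x fun g =>
        show ((φ (a * b) g : G) : G ⧸ N) = (φ a (φ b g) : G) by simp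
      smul_mul _ := map_mul _
      smul_one _ := map_one _ }
  MulDistribMulAction.toMulAut A (G ⧸ N)

@[simp] lemma quotientMulAut_apply_mk [N.Normal] (a : A) (x : G) :
    quotientMulAut φ N hN a x = (φ a x : G ⧸ N) := rfl

lemma le_fixedBySup_of_restrictMulAut (h : fixedBySup (restrictMulAut φ N hN) = ⊤) :
    N ≤ fixedBySup φ := by
  have := map_fixedBySup_le (restrictMulAut φ N hN) φ N.subtype fun _ _ => rfl
  rwa [h, ← MonoidHom.range_eq_map, N.range_subtype] at this

variable {r : ℕ} [Fact r.Prime] [N.Normal]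

lemma fixedBy_quotientMulAut_le_map (hA : IsPGroup r A) (hNr : ¬ r ∣ Nat.card N) (a : A) :
    fixedBy (quotientMulAut φ N hN a) ≤ (fixedBy (φ a)).map (QuotientGroup.mk' N) := by
  intro x hx
  let P := (MulAction.stabilizer (MulAut (G ⧸ N)) x).comap (quotientMulAut φ N hN)
  -- `P`, the stabiliser of `x` in `A`, acts on the fibre over `x`, which has `|N|` points.
  have hfiber :
      ∀ e : P.map φ, ∀ y ∈ QuotientGroup.mk ⁻¹' {x}, e • y ∈ QuotientGroup.mk ⁻¹' {x} := by
    rintro ⟨_, c, hc, rfl⟩ y (hy : (y : G ⧸ N) = x)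
    show ((φ c y : G) : G ⧸ N) = x
    rw [← quotientMulAut_apply_mk φ N hN, hy]
    exact hc
  have hcard : ¬ r ∣ Nat.card (QuotientGroup.mk ⁻¹' {x} : Set G) := by
    rwa [QuotientGroup.card_preimage_mk, Nat.card_unique (α := ({x} : Set (G ⧸ N))), mul_one]
  obtain ⟨y, hy, hfix⟩ :=
    ((hA.to_subgroup P).map φ).exists_mem_forall_smul_eq _ hfiber hcard
  exact ⟨y, hfix ⟨φ a, a, hx, rfl⟩, hy⟩

theorem fixedBySup_eq_top_of_normal (hA : IsPGroup r A) (hNr : ¬ r ∣ Nat.card N)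
    (hsub : fixedBySup (restrictMulAut φ N hN) = ⊤)
    (hquot : fixedBySup (quotientMulAut φ N hN) = ⊤) : fixedBySup φ = ⊤ := by
  have hmap : (fixedBySup φ).map (QuotientGroup.mk' N) = ⊤ := by
    refine top_le_iff.mp (hquot ▸ fixedBySup_le_iff.mpr fun a ha => ?_)
    exact (fixedBy_quotientMulAut_le_map φ N hN hA hNr a).trans
      (Subgroup.map_mono (fixedBy_le_fixedBySup φ ha))
  rw [← sup_eq_right.mpr (le_fixedBySup_of_restrictMulAut φ N hN hsub),
    ← QuotientGroup.comap_map_mk', hmap, Subgroup.comap_top]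

end InvariantSubgroup

lemma Subgroup.mem_of_pow_mem_of_coprime_s8 {G : Type*} [Group G] [Finite G] (H : Subgroup G)
    {n : ℕ} (hn : n.Coprime (Nat.card G)) {g : G} (h : g ^ n ∈ H) : g ∈ H := by
  obtain ⟨m, hm⟩ :=
    exists_pow_eq_self_of_coprime (hn.coprime_dvd_right (_root_.orderOf_dvd_natCard g))
  exact hm ▸ H.pow_mem h m

/-- The `r + 1` lines through the origin of `𝔽_r²` cover every other point exactly once. -/
theorem ZMod.prod_lines_mul_eq {r : ℕ} [Fact r.Prime] {M : Type*} [CommMonoid M]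
    (f : ZMod r × ZMod r → M) :
    (∏ i : ZMod r, ∏ j : ZMod r, f (j, j * i)) * ∏ j : ZMod r, f (0, j) =
      f (0, 0) ^ r * ∏ w, f w := by
  have hzero : ∏ i : ZMod r, f (0, 0 * i) = f (0, 0) ^ r := by
    simp [Finset.prod_const, ZMod.card]
  have hunit : ∀ j ∈ Finset.univ.erase (0 : ZMod r), ∏ i, f (j, j * i) = ∏ t, f (j, t) :=
    fun j hj => Fintype.prod_equiv (Equiv.mulLeft₀ j (Finset.ne_of_mem_erase hj)) _ _ fun _ => rfl
  rw [Finset.prod_comm, ← Finset.mul_prod_erase _ _ (Finset.mem_univ 0), hzero,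
    Finset.prod_congr rfl hunit, Fintype.prod_prod_type,
    ← Finset.mul_prod_erase _ (fun j => ∏ t, f (j, t)) (Finset.mem_univ 0), mul_assoc,
    mul_comm (∏ _ ∈ _, _)]

theorem fixedBySup_eq_top_of_commGroup {A G : Type*} [CommGroup A] [CommGroup G] [Finite G]
    {r : ℕ} [hr : Fact r.Prime] (hGr : ¬ r ∣ Nat.card G) (φ : A →* MulAut G) {a b : A}
    (ha : a ^ r = 1) (hb : b ^ r = 1) (hb1 : b ≠ 1) (hab : a ∉ Subgroup.zpowers b) :
    fixedBySup φ = ⊤ := by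
  let ι : ZMod r × ZMod r → A := fun w => a ^ w.1.val * b ^ w.2.val
  have hι : ∀ v w, ι (v + w) = ι v * ι w := by
    intro v w
    simp only [ι, Prod.fst_add, Prod.snd_add, ZMod.val_add, ← pow_eq_pow_mod _ ha,
      ← pow_eq_pow_mod _ hb, pow_add]
    exact mul_mul_mul_comm _ _ _ _
  have hι_ne_one : ∀ i, ι (1, i) ≠ 1 := fun i h => by
    have : a = (b ^ i.val)⁻¹ := by simpa [ι, ZMod.val_one] using eq_inv_of_mul_eq_one_left h
    exact hab (this ▸ inv_mem (Subgroup.npow_mem_zpowers b _))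
  have hι_b : ι (0, 1) = b := by simp [ι, ZMod.val_one]
  refine eq_top_iff.mpr fun g _ => (fixedBySup φ).mem_of_pow_mem_of_coprime_s8
    ((Nat.Prime.coprime_iff_not_dvd hr.out).2 hGr) ?_
  let f : ZMod r × ZMod r → G := fun w => φ (ι w) g
  have hf : ∀ v w, φ (ι v) (f w) = f (v + w) := fun v w => by
    simp only [f, hι, map_mul, MulAut.mul_apply]
  have hline : ∀ v, ι v ≠ 1 → ∏ j : ZMod r, f (j • v) ∈ fixedBySup φ := by
    intro v hv
    refine fixedBy_le_fixedBySup φ hv ?_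
    rw [mem_fixedBy, map_prod]
    simp_rw [hf]
    exact Fintype.prod_equiv (Equiv.addRight 1) _ _ fun j => by simp [add_smul, add_comm]
  have htotal : ∏ w, f w ∈ fixedBySup φ := by
    refine fixedBy_le_fixedBySup φ (hι_b ▸ hb1) ?_
    rw [mem_fixedBy, map_prod]
    simp_rw [hf]
    exact Fintype.prod_equiv (Equiv.addLeft (0, 1)) _ _ fun _ => rfl
  have hf0 : f (0, 0) = g := by simp [f, ι]
  have hpow : g ^ r = (∏ i, ∏ j, f (j, j * i)) * (∏ j, f (0, j)) * (∏ w, f w)⁻¹ := by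
    rw [ZMod.prod_lines_mul_eq, hf0, mul_inv_cancel_right]
  rw [hpow]
  refine mul_mem (mul_mem (prod_mem fun i _ => ?_) ?_) (inv_mem htotal)
  · simpa using hline (1, i) (hι_ne_one i)
  · simpa using hline (0, 1) (hι_b ▸ hb1)

theorem IsPGroup.exists_pow_eq_one_not_mem_zpowers {A : Type*} [CommGroup A] [Finite A] {r : ℕ}
    [hr : Fact r.Prime] (hA : IsPGroup r A) (hnc : ¬ IsCyclic A) :
    ∃ a b : A, a ^ r = 1 ∧ b ^ r = 1 ∧ b ≠ 1 ∧ a ∉ Subgroup.zpowers b := by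
  obtain ⟨g, hg⟩ := Monoid.exists_orderOf_eq_exponent (G := A) Monoid.ExponentExists.of_finite
  set C := Subgroup.zpowers g
  have hC : C ≠ ⊤ := fun h => hnc (isCyclic_iff_exists_zpowers_eq_top.mpr ⟨g, h⟩)
  obtain ⟨y, hy⟩ := exists_prime_orderOf_dvd_card' (G := A ⧸ C) r <|
    ((hA.to_quotient C).nontrivial_iff_card.mp (QuotientGroup.nontrivial_iff.mpr hC)).elim
      fun n ⟨hn, hcard⟩ => hcard ▸ dvd_pow_self r hn.ne'
  obtain ⟨x, rfl⟩ := QuotientGroup.mk_surjective y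
  have hxC : x ∉ C := fun h => hr.out.ne_one <| by
    rw [← hy, (QuotientGroup.eq_one_iff x).mpr h, orderOf_one]
  obtain ⟨k, hk : g ^ k = x ^ r⟩ : x ^ r ∈ C := by
    rw [← QuotientGroup.eq_one_iff, QuotientGroup.mk_pow, ← hy, pow_orderOf_eq_one]
  obtain ⟨n, hn⟩ := IsPGroup.iff_orderOf.mp hA g
  obtain _ | m := n
  · rw [pow_zero, hg] at hn
    refine absurd ?_ hxC
    rw [← pow_one x, ← hn, Monoid.pow_exponent_eq_one]
    exact one_mem C
  obtain ⟨l, rfl⟩ : (r : ℤ) ∣ k := by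
    have hgk : g ^ (k * ↑(r ^ m)) = 1 := by
      rw [zpow_mul, hk, zpow_natCast, ← pow_mul, ← pow_succ', ← hn, hg,
        Monoid.pow_exponent_eq_one]
    rw [← orderOf_dvd_iff_zpow_eq_one, hn, Nat.cast_pow, pow_succ, mul_comm k] at hgk
    exact Int.dvd_of_mul_dvd_mul_left (pow_ne_zero _ (Int.natCast_ne_zero.mpr hr.out.ne_zero)) hgk
  refine ⟨x * (g ^ l)⁻¹, g ^ r ^ m, ?_, ?_, ?_, fun h => hxC ?_⟩
  · rw [mul_pow, inv_pow, ← hk, ← zpow_natCast (g ^ l), ← zpow_mul, mul_comm l, mul_inv_cancel]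
  · rw [← pow_mul, ← pow_succ, ← hn, pow_orderOf_eq_one]
  · exact pow_ne_one_of_lt_orderOf (pow_ne_zero _ hr.out.ne_zero)
      (hn ▸ Nat.pow_lt_pow_succ hr.out.one_lt)
  · have hle : Subgroup.zpowers (g ^ r ^ m) ≤ C :=
      Subgroup.zpowers_le.mpr (Subgroup.npow_mem_zpowers g _)
    simpa using mul_mem (hle h) (Subgroup.zpow_mem_zpowers g l)

theorem fixedBySup_eq_top_of_isPGroup {A G : Type*} [CommGroup A] [instG : Group G] [Finite G]
    {r q : ℕ} [Fact r.Prime] [Fact q.Prime] (hA : IsPGroup r A) {a b : A} (ha : a ^ r = 1)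
    (hb : b ^ r = 1) (hb1 : b ≠ 1) (hab : a ∉ Subgroup.zpowers b) (hG : IsPGroup q G)
    (hGr : ¬ r ∣ Nat.card G) (φ : A →* MulAut G) : fixedBySup φ = ⊤ := by
  induction G using Finite.induction_subsingleton_or_nontrivial generalizing instG with
  | hbase => exact Subsingleton.elim _ _
  | hstep G ih =>
    have hZ : ∀ c, ∀ x ∈ Subgroup.center G, φ c x ∈ Subgroup.center G := fun c x hx =>
      Subgroup.characteristic_iff_le_comap.mp inferInstance (φ c) hx
    have hZr : ¬ r ∣ Nat.card (Subgroup.center G) :=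
      fun h => hGr (h.trans (Subgroup.card_subgroup_dvd_card _))
    have hcard : Nat.card (G ⧸ Subgroup.center G) < Nat.card G := by
      rw [(Subgroup.center G).card_eq_card_quotient_mul_card_subgroup]
      exact lt_mul_of_one_lt_right Nat.card_pos
        ((Subgroup.one_lt_card_iff_ne_bot _).mpr hG.bot_lt_center.ne')
    refine fixedBySup_eq_top_of_normal φ _ hZ hA hZr ?_ ?_
    · open scoped IsMulCommutative in
      exact fixedBySup_eq_top_of_commGroup hZr _ ha hb hb1 hab
    · exact ih _ hcard (hG.to_quotient _)
        (fun h => hGr (h.trans (Subgroup.card_quotient_dvd_card _))) _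

theorem exists_sylow_forall_apply_mem {A G : Type*} [Group A] [Group G] [Finite G] {r : ℕ}
    [Fact r.Prime] (hA : IsPGroup r A) (hGr : ¬ r ∣ Nat.card G) (φ : A →* MulAut G) (q : ℕ)
    [Fact q.Prime] : ∃ Q : Sylow q G, ∀ a, ∀ x ∈ (Q : Subgroup G), φ a x ∈ (Q : Subgroup G) := by
  let := MulDistribMulAction.compHom G φ
  obtain ⟨Q₀⟩ := (inferInstance : Nonempty (Sylow q G))
  obtain ⟨Q, hQ⟩ := hA.nonempty_fixed_point_of_prime_not_dvd_card (Sylow q G)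
    fun h => hGr (h.trans (Q₀.card_dvd_index.trans Q₀.index_dvd_card))
  refine ⟨Q, fun a x hx => ?_⟩
  rw [← hQ a]
  exact Subgroup.smul_mem_pointwise_smul x a _ hx

theorem stmt8 {A G : Type*} [CommGroup A] [Finite A] [Group G] [Finite G]
    (r : ℕ) (hr : r.Prime) (hpA : IsPGroup r A) (hnc : ¬ IsCyclic A)
    (hG : ¬ r ∣ Nat.card G) (φ : A →* MulAut G) :
    (⨆ a ∈ {a : A | a ≠ 1}, fixedBy (φ a)) = ⊤ := by
  show fixedBySup φ = ⊤
  have := Fact.mk hr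
  obtain ⟨a, b, ha, hb, hb1, hab⟩ := hpA.exists_pow_eq_one_not_mem_zpowers hnc
  refine Subgroup.index_eq_one.mp (by_contra fun hne => ?_)
  obtain ⟨q, hq, hqdvd⟩ := Nat.exists_prime_and_dvd hne
  have := Fact.mk hq
  obtain ⟨Q, hQ⟩ := exists_sylow_forall_apply_mem hpA hG φ q
  have hQle : (Q : Subgroup G) ≤ fixedBySup φ :=
    le_fixedBySup_of_restrictMulAut φ Q hQ <| fixedBySup_eq_top_of_isPGroup hpA ha hb hb1 hab
      Q.isPGroup' (fun h => hG (h.trans (Subgroup.card_subgroup_dvd_card _))) _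
  exact Q.not_dvd_index (hqdvd.trans (Subgroup.index_dvd_of_le hQle))
end

section
/- Let A be an abelian group acting on a finite group X which is a direct product X = K₁ × ⋯ × Kₙ of nonabelian simple subgroups permuted transitively by A, and suppose b ∈ A acts semiregularly (without fixed points) on {K₁,…,Kₙ}. Then C_X(b) is a direct product of n/|⟨b⟩| nonabelian simple subgroups permuted transitively by A, each isomorphic to K₁. -/
/-!
In the coordinates `G ≃* ∀ i, K i`, the automorphism `φ a` carries the coordinate at `i` to the
coordinate at `a • i`. Hence `g` is centralized by `b` iff its coordinates satisfy
`g (c • i) = φ c (g i)` for every `c ∈ ⟨b⟩`. Since `⟨b⟩` acts freely on the factors, a choice of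
representatives `r j` of its `n / |b|` orbits identifies `C_G(b)` with `∀ j, K (r j)`: the `j`-th
factor is the diagonal of the product over the orbit of `r j`. These diagonals are the elements
of `C_G(b)` supported on a single orbit. As `A` is abelian, `φ a` preserves `C_G(b)` and maps
orbits to orbits, so it permutes the diagonals, transitively since `A` is transitive on factors.
-/

theorem Finset.noncommProd_univ_comp_equiv_s12 {M ι : Type*} [Monoid M] [Fintype ι] (e : ι ≃ ι)
    (f : ι → M) (h₁ h₂) : univ.noncommProd (f ∘ e) h₁ = univ.noncommProd f h₂ := by
  simp only [Finset.noncommProd, ← Multiset.map_map, Multiset.map_univ_val_equiv]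

theorem MulEquiv.forall_mul_comm_iff {H L : Type*} [Group H] [Group L] (e : H ≃* L) :
    (∀ x y : H, x * y = y * x) ↔ ∀ x y : L, x * y = y * x :=
  ⟨fun h x y => e.symm.injective (by rw [map_mul, map_mul, h]),
    fun h x y => e.injective (by rw [map_mul, map_mul, h])⟩

theorem fixedBy_le_fixedBy_zpow {G : Type*} [Group G] (e : MulAut G) (k : ℤ) :
    fixedBy e ≤ fixedBy (e ^ k) :=
  fun g hg => Subgroup.zpow_mem (MulAction.stabilizer (MulAut G) g) (show e • g = g from hg) k

theorem stabilizer_zpowers_eq_bot {A ι : Type*} [Group A] [MulAction A ι] {b : A}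
    (h : ∀ m : ℤ, b ^ m ≠ 1 → ∀ i : ι, b ^ m • i ≠ i) (i : ι) :
    MulAction.stabilizer (Subgroup.zpowers b) i = ⊥ := by
  refine (Subgroup.eq_bot_iff_forall _).mpr fun ⟨c, hc⟩ hci => ?_
  obtain ⟨m, rfl⟩ := Subgroup.mem_zpowers_iff.mp hc
  by_contra hne
  exact h m (fun h1 => hne (Subtype.ext h1)) i hci

open MulAction in
theorem exists_transversal_equiv_prod {C ι J : Type*} [Group C] [MulAction C ι] [Finite ι]
    [Finite J] (hfree : ∀ i : ι, stabilizer C i = ⊥)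
    (hJ : Nat.card J = Nat.card ι / Nat.card C) :
    ∃ (r : J → ι) (e : ι ≃ J × C), ∀ j c, e.symm (j, c) = c • r j := by
  let e₀ := selfEquivOrbitsQuotientProd hfree
  have hι : Nat.card ι = Nat.card (orbitRel.Quotient C ι) * Nat.card C := by
    rw [Nat.card_congr e₀, Nat.card_prod]
  have hcard : Nat.card (orbitRel.Quotient C ι) = Nat.card ι / Nat.card C := by
    rcases (Nat.card C).eq_zero_or_pos with h | h
    · -- `Nat.card C = 0` means that `C` is infinite, which forces `ι` to be empty.
      have := Nat.card_le_card_of_surjective _ (Quotient.mk_surjective (s := orbitRel C ι))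
      rw [hι, h, mul_zero] at this
      simp [h, Nat.le_zero.mp this]
    · rw [hι, Nat.mul_div_cancel _ h]
  have : Finite (orbitRel.Quotient C ι) := Quotient.finite _
  obtain ⟨ε⟩ : Nonempty (J ≃ orbitRel.Quotient C ι) := Finite.card_eq.mp (hJ.trans hcard.symm)
  exact ⟨fun j => (ε j).out, e₀.trans (ε.symm.prodCongr (Equiv.refl C)), fun j c => rfl⟩

namespace MonoidHom

variable {G J : Type*} [Group G] [DecidableEq J] {L : J → Type*} [∀ j, Group (L j)]

theorem commute_range_comp_mulSingle (Ψ : (∀ j, L j) →* G) :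
    Pairwise fun j k => ∀ (x : (Ψ.comp (mulSingle L j)).range)
      (y : (Ψ.comp (mulSingle L k)).range),
      Commute ((Ψ.comp (mulSingle L j)).range.subtype x)
        ((Ψ.comp (mulSingle L k)).range.subtype y) := by
  rintro j k hjk ⟨_, u, rfl⟩ ⟨_, v, rfl⟩
  exact (Pi.mulSingle_commute hjk u v).map Ψ

variable [Fintype J]

theorem exists_noncommPiCoprod_range_comp_mulSingle_comp_eq (Ψ : (∀ j, L j) →* G) :
    ∃ ρ : (∀ j, L j) →* ∀ j, (Ψ.comp (mulSingle L j)).range, Function.Surjective ρ ∧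
      (noncommPiCoprod (fun j => (Ψ.comp (mulSingle L j)).range.subtype)
        Ψ.commute_range_comp_mulSingle).comp ρ = Ψ := by
  let ρ := MonoidHom.pi fun j => (Ψ.comp (mulSingle L j)).rangeRestrict.comp (Pi.evalMonoidHom L j)
  refine ⟨ρ, fun x => ?_, pi_ext fun j u => ?_⟩
  · choose u hu using fun j => (x j).2
    exact ⟨u, funext fun j => Subtype.ext (hu j)⟩
  · have : ρ (Pi.mulSingle j u) = Pi.mulSingle j ((Ψ.comp (mulSingle L j)).rangeRestrict u) :=
      funext (Pi.apply_mulSingle (fun k => (Ψ.comp (mulSingle L k)).rangeRestrict)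
        (fun k => map_one _) j u)
    simp [this]

theorem range_noncommPiCoprod_range_comp_mulSingle (Ψ : (∀ j, L j) →* G) :
    (noncommPiCoprod (fun j => (Ψ.comp (mulSingle L j)).range.subtype)
      Ψ.commute_range_comp_mulSingle).range = Ψ.range := by
  obtain ⟨ρ, hρ, hcomp⟩ := exists_noncommPiCoprod_range_comp_mulSingle_comp_eq Ψ
  conv_rhs => rw [← hcomp]
  rw [range_comp, range_eq_top.mpr hρ, range_eq_map]

theorem injective_noncommPiCoprod_range_comp_mulSingle {Ψ : (∀ j, L j) →* G}
    (hΨ : Function.Injective Ψ) :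
    Function.Injective (noncommPiCoprod (fun j => (Ψ.comp (mulSingle L j)).range.subtype)
      Ψ.commute_range_comp_mulSingle) := by
  obtain ⟨ρ, hρ, hcomp⟩ := exists_noncommPiCoprod_range_comp_mulSingle_comp_eq Ψ
  intro x y hxy
  obtain ⟨u, rfl⟩ := hρ x
  obtain ⟨v, rfl⟩ := hρ y
  rw [← comp_apply, ← comp_apply, hcomp] at hxy
  rw [hΨ hxy]

end MonoidHom

section PermutedFactors

variable {A G ι : Type*} [Group A] [Group G] {K : ι → Subgroup G}

theorem injective_of_pairwise_commute_of_noncomm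
    (hnonab : ∀ i, ¬ ∀ x y : K i, x * y = y * x)
    (hcomm : Pairwise fun i j => ∀ (x : K i) (y : K j),
      Commute ((K i).subtype x) ((K j).subtype y)) :
    Function.Injective K := by
  intro i j hij
  by_contra hne
  exact hnonab j fun x y => Subtype.ext (hcomm hne ⟨x, by rw [hij]; exact x.2⟩ y)

theorem exists_hom_perm_map_eq (φ : A →* MulAut G) (hK : Function.Injective K)
    (hperm : ∀ (a : A) i, ∃ j, (K i).map (φ a).toMonoidHom = K j) :
    ∃ σ : A →* Equiv.Perm ι, ∀ a i, (K i).map (φ a).toMonoidHom = K (σ a i) := by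
  choose τ hτ using hperm
  have hmul : ∀ a a' i, τ (a * a') i = τ a (τ a' i) := fun a a' i =>
    hK (by rw [← hτ, ← hτ, ← hτ, Subgroup.map_map, map_mul]; rfl)
  have hone : ∀ i, τ 1 i = i := fun i => hK (by rw [← hτ, map_one]; exact Subgroup.map_id _)
  refine ⟨{ toFun a := ⟨τ a, τ a⁻¹, fun i => ?_, fun i => ?_⟩, map_one' := ?_, map_mul' := ?_ }, hτ⟩
  · rw [← hmul, inv_mul_cancel, hone]
  · rw [← hmul, mul_inv_cancel, hone]
  · exact Equiv.ext hone
  · exact fun a a' => Equiv.ext (hmul a a')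

variable [MulAction A ι] {φ : A →* MulAut G}

theorem smul_mem_of_map_eq (hK : ∀ a i, (K i).map (φ a).toMonoidHom = K (a • i)) (a : A)
    {i : ι} {x : G} (hx : x ∈ K i) : φ a x ∈ K (a • i) :=
  hK a i ▸ Subgroup.mem_map_of_mem _ hx

variable [Fintype ι]
  (hcomm : Pairwise fun i j => ∀ (x : K i) (y : K j),
    Commute ((K i).subtype x) ((K j).subtype y))

noncomputable def coords
    (hprod : Function.Bijective (MonoidHom.noncommPiCoprod (fun i => (K i).subtype) hcomm)) :
    G ≃* ∀ i, K i :=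
  (MulEquiv.ofBijective _ hprod).symm

variable
  (hprod : Function.Bijective (MonoidHom.noncommPiCoprod (fun i => (K i).subtype) hcomm))

theorem noncommPiCoprod_coords (g : G) :
    MonoidHom.noncommPiCoprod _ hcomm (coords hcomm hprod g) = g :=
  (MulEquiv.ofBijective _ hprod).apply_symm_apply g

theorem coords_noncommPiCoprod (f : ∀ i, K i) :
    coords hcomm hprod (MonoidHom.noncommPiCoprod _ hcomm f) = f :=
  (MulEquiv.ofBijective _ hprod).symm_apply_apply f

theorem coe_coords_map (hK : ∀ a i, (K i).map (φ a).toMonoidHom = K (a • i)) (a : A) (g : G)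
    (i : ι) : (coords hcomm hprod (φ a g) i : G) = φ a (coords hcomm hprod g (a⁻¹ • i)) := by
  set f := coords hcomm hprod g
  let f' : ∀ i, K i := fun i => ⟨φ a (f (a⁻¹ • i)), by
    simpa using smul_mem_of_map_eq hK a (f (a⁻¹ • i)).2⟩
  suffices coords hcomm hprod (φ a g) = f' by rw [this]
  rw [← coords_noncommPiCoprod hcomm hprod f', ← noncommPiCoprod_coords hcomm hprod g,
    MonoidHom.noncommPiCoprod_apply, MonoidHom.noncommPiCoprod_apply, Finset.map_noncommProd]
  congr 1
  exact (Finset.noncommProd_univ_comp_equiv_s12 (MulAction.toPerm a⁻¹) (fun i => φ a (f i)) _ _).symm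

theorem mem_fixedBy_iff_coords (hK : ∀ a i, (K i).map (φ a).toMonoidHom = K (a • i)) (a : A)
    (g : G) : g ∈ fixedBy (φ a) ↔
      ∀ i, (coords hcomm hprod g (a • i) : G) = φ a (coords hcomm hprod g i) := by
  refine ⟨fun hg i => ?_, fun h => ?_⟩
  · conv_lhs => rw [← show φ a g = g from hg]
    rw [coe_coords_map hcomm hprod hK, inv_smul_smul]
  · refine (coords hcomm hprod).injective (funext fun i => Subtype.ext ?_)
    rw [coe_coords_map hcomm hprod hK, ← h, smul_inv_smul]

end PermutedFactors

section Diagonal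

variable {A G ι J : Type*} [CommGroup A] [Group G] [MulAction A ι]
  {φ : A →* MulAut G} {K : ι → Subgroup G} {b : A} {r : J → ι} {e : ι ≃ J × Subgroup.zpowers b}

theorem transversal_smul_rep (he : ∀ j c, e.symm (j, c) = (c : A) • r j) (i : ι) :
    ((e i).2 : A) • r (e i).1 = i := by
  rw [← he, Equiv.symm_apply_apply]

theorem transversal_apply_rep (he : ∀ j c, e.symm (j, c) = (c : A) • r j) (j : J) :
    e (r j) = (j, 1) := by
  rw [← Equiv.eq_symm_apply, he, OneMemClass.coe_one, one_smul]

theorem transversal_apply_smul (he : ∀ j c, e.symm (j, c) = (c : A) • r j)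
    (c : Subgroup.zpowers b) (i : ι) : e ((c : A) • i) = ((e i).1, c * (e i).2) := by
  rw [← Equiv.eq_symm_apply, he, Subgroup.coe_mul, mul_smul, transversal_smul_rep he]

theorem transversal_fst_smul (he : ∀ j c, e.symm (j, c) = (c : A) • r j) (a : A) (i : ι) :
    (e (a • i)).1 = (e (a • r (e i).1)).1 := by
  conv_lhs => rw [← transversal_smul_rep he i, smul_comm, transversal_apply_smul he]

variable (hK : ∀ a i, (K i).map (φ a).toMonoidHom = K (a • i))
  (he : ∀ j c, e.symm (j, c) = (c : A) • r j)

/-- Spreads `y j ∈ K (r j)` over the orbit of `r j`: the coordinate at `c • r j` is `φ c (y j)`. -/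
def diagonal : (∀ j, K (r j)) →* ∀ i, K i where
  toFun y i := ⟨φ (e i).2 (y (e i).1), by
    have h := smul_mem_of_map_eq hK ((e i).2 : A) (y (e i).1).2
    rwa [transversal_smul_rep he] at h⟩
  map_one' := by ext; simp
  map_mul' y z := by ext; simp

theorem coe_diagonal_apply (y : ∀ j, K (r j)) (i : ι) :
    (diagonal hK he y i : G) = φ (e i).2 (y (e i).1) :=
  rfl

theorem diagonal_injective : Function.Injective (diagonal hK he) := by
  intro y z hyz
  funext j
  have := congrArg Subtype.val (congrFun hyz (r j))
  rw [coe_diagonal_apply, coe_diagonal_apply, transversal_apply_rep he] at this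
  simp only [OneMemClass.coe_one, map_one, MulAut.one_apply] at this
  exact Subtype.ext this

theorem coe_diagonal_apply_smul (y : ∀ j, K (r j)) (c : Subgroup.zpowers b) (i : ι) :
    (diagonal hK he y ((c : A) • i) : G) = φ c (diagonal hK he y i) := by
  rw [coe_diagonal_apply, coe_diagonal_apply, transversal_apply_smul he, Subgroup.coe_mul,
    map_mul, MulAut.mul_apply]

variable [Fintype ι]
  (hcomm : Pairwise fun i j => ∀ (x : K i) (y : K j),
    Commute ((K i).subtype x) ((K j).subtype y))

theorem diagonal_coords_rep
    (hprod : Function.Bijective (MonoidHom.noncommPiCoprod (fun i => (K i).subtype) hcomm))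
    {g : G} (hg : g ∈ fixedBy (φ b)) :
    diagonal hK he (fun j => coords hcomm hprod g (r j)) = coords hcomm hprod g := by
  funext i
  apply Subtype.ext
  obtain ⟨k, hk⟩ := Subgroup.mem_zpowers_iff.mp (e i).2.2
  have hfix : g ∈ fixedBy (φ (e i).2) := by
    rw [← hk, map_zpow]
    exact fixedBy_le_fixedBy_zpow _ k hg
  rw [coe_diagonal_apply, ← (mem_fixedBy_iff_coords hcomm hprod hK _ g).mp hfix,
    transversal_smul_rep he]

noncomputable def diagonalEmbedding : (∀ j, K (r j)) →* G :=
  (MonoidHom.noncommPiCoprod _ hcomm).comp (diagonal hK he)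

theorem coords_diagonalEmbedding
    (hprod : Function.Bijective (MonoidHom.noncommPiCoprod (fun i => (K i).subtype) hcomm))
    (y : ∀ j, K (r j)) :
    coords hcomm hprod (diagonalEmbedding hK he hcomm y) = diagonal hK he y :=
  coords_noncommPiCoprod hcomm hprod _

theorem diagonalEmbedding_injective
    (hprod : Function.Bijective (MonoidHom.noncommPiCoprod (fun i => (K i).subtype) hcomm)) :
    Function.Injective (diagonalEmbedding hK he hcomm) :=
  hprod.1.comp (diagonal_injective hK he)

theorem range_diagonalEmbedding
    (hprod : Function.Bijective (MonoidHom.noncommPiCoprod (fun i => (K i).subtype) hcomm)) :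
    (diagonalEmbedding hK he hcomm).range = fixedBy (φ b) := by
  ext g
  refine ⟨?_, fun hg => ⟨fun j => coords hcomm hprod g (r j), ?_⟩⟩
  · rintro ⟨y, rfl⟩
    refine (mem_fixedBy_iff_coords hcomm hprod hK b _).mpr fun i => ?_
    rw [coords_diagonalEmbedding hK he hcomm hprod]
    exact coe_diagonal_apply_smul hK he y ⟨b, Subgroup.mem_zpowers b⟩ i
  · rw [diagonalEmbedding, MonoidHom.comp_apply, diagonal_coords_rep hK he hcomm hprod hg,
      noncommPiCoprod_coords]

variable [DecidableEq J]

theorem mem_range_diagonalEmbedding_comp_mulSingle_iff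
    (hprod : Function.Bijective (MonoidHom.noncommPiCoprod (fun i => (K i).subtype) hcomm))
    (j : J) (g : G) :
    g ∈ ((diagonalEmbedding hK he hcomm).comp (MonoidHom.mulSingle _ j)).range ↔
      g ∈ fixedBy (φ b) ∧ ∀ i, (e i).1 ≠ j → coords hcomm hprod g i = 1 := by
  refine ⟨?_, fun ⟨hg, hsupp⟩ => ⟨coords hcomm hprod g (r j), ?_⟩⟩
  · rintro ⟨x, rfl⟩
    refine ⟨range_diagonalEmbedding hK he hcomm hprod ▸ ⟨_, rfl⟩,
      fun i hi => Subtype.ext ?_⟩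
    rw [MonoidHom.comp_apply, coords_diagonalEmbedding hK he hcomm hprod, coe_diagonal_apply,
      MonoidHom.mulSingle_apply, Pi.mulSingle_eq_of_ne hi]
    simp
  · have hy : Pi.mulSingle j (coords hcomm hprod g (r j)) =
        fun j' => coords hcomm hprod g (r j') := by
      funext j'
      by_cases h : j' = j
      · subst h; simp
      · rw [Pi.mulSingle_eq_of_ne h, hsupp _ (by rwa [transversal_apply_rep he])]
    rw [MonoidHom.comp_apply, MonoidHom.mulSingle_apply, hy, diagonalEmbedding,
      MonoidHom.comp_apply, diagonal_coords_rep hK he hcomm hprod hg, noncommPiCoprod_coords]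

theorem map_range_diagonalEmbedding_comp_mulSingle_le
    (hprod : Function.Bijective (MonoidHom.noncommPiCoprod (fun i => (K i).subtype) hcomm))
    (a : A) (j : J) :
    ((diagonalEmbedding hK he hcomm).comp (MonoidHom.mulSingle _ j)).range.map
        (φ a).toMonoidHom ≤
      ((diagonalEmbedding hK he hcomm).comp (MonoidHom.mulSingle _ (e (a • r j)).1)).range := by
  intro _ hg'
  obtain ⟨g, hg, rfl⟩ := Subgroup.mem_map.mp hg'
  rw [mem_range_diagonalEmbedding_comp_mulSingle_iff hK he hcomm hprod] at hg ⊢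
  refine ⟨?_, fun i hi => Subtype.ext ?_⟩
  · change φ b (φ a g) = φ a g
    rw [← MulAut.mul_apply, ← map_mul, mul_comm, map_mul, MulAut.mul_apply, hg.1]
  · have hi' : (e (a⁻¹ • i)).1 ≠ j := fun h => hi <| by
      rw [← h, ← transversal_fst_smul he, smul_inv_smul]
    change (coords hcomm hprod (φ a g) i : G) = 1
    rw [coe_coords_map hcomm hprod hK, hg.2 _ hi']
    simp

theorem map_range_diagonalEmbedding_comp_mulSingle
    (hprod : Function.Bijective (MonoidHom.noncommPiCoprod (fun i => (K i).subtype) hcomm))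
    (a : A) (j : J) :
    ((diagonalEmbedding hK he hcomm).comp (MonoidHom.mulSingle _ j)).range.map
        (φ a).toMonoidHom =
      ((diagonalEmbedding hK he hcomm).comp (MonoidHom.mulSingle _ (e (a • r j)).1)).range := by
  refine le_antisymm (map_range_diagonalEmbedding_comp_mulSingle_le hK he hcomm hprod a j)
    fun g hg => ⟨φ a⁻¹ g, ?_, ?_⟩
  · have hback := map_range_diagonalEmbedding_comp_mulSingle_le hK he hcomm hprod a⁻¹
      (e (a • r j)).1
    rw [← transversal_fst_smul he, inv_smul_smul, transversal_apply_rep he] at hback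
    exact hback ⟨g, hg, rfl⟩
  · change φ a (φ a⁻¹ g) = g
    rw [← MulAut.mul_apply, ← map_mul, mul_inv_cancel, map_one, MulAut.one_apply]

end Diagonal

theorem stmt12_general {A G : Type*} [CommGroup A] [Group G]
    (φ : A →* MulAut G) (n : ℕ) (hn : 0 < n) (Ks : Fin n → Subgroup G)
    (hsimple : ∀ i, IsSimpleGroup (Ks i))
    (hnonab : ∀ i, ¬ ∀ x y : (Ks i), x * y = y * x)
    (hcomm : Pairwise fun i j => ∀ (x : (Ks i)) (y : (Ks j)),
      Commute ((Ks i).subtype x) ((Ks j).subtype y))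
    (hprod : Function.Bijective
      (MonoidHom.noncommPiCoprod (fun i => (Ks i).subtype) hcomm))
    (hperm : ∀ (a : A) (i : Fin n), ∃ j, (Ks i).map (φ a).toMonoidHom = Ks j)
    (htrans : ∀ i j : Fin n, ∃ a : A, (Ks i).map (φ a).toMonoidHom = Ks j)
    (b : A)
    (hsemireg : ∀ m : ℤ, b ^ m ≠ 1 → ∀ i, (Ks i).map (φ (b ^ m)).toMonoidHom ≠ Ks i) :
    ∃ (Hs : Fin (n / orderOf b) → Subgroup G)
      (hc : Pairwise fun j k => ∀ (x : (Hs j)) (y : (Hs k)),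
        Commute ((Hs j).subtype x) ((Hs k).subtype y)),
      (∀ j, Nonempty ((Hs j) ≃* (Ks ⟨0, hn⟩))) ∧
      (∀ j, IsSimpleGroup (Hs j)) ∧
      (∀ j, ¬ ∀ x y : (Hs j), x * y = y * x) ∧
      (∀ (a : A) (j), ∃ k, (Hs j).map (φ a).toMonoidHom = Hs k) ∧
      (∀ j k, ∃ a : A, (Hs j).map (φ a).toMonoidHom = Hs k) ∧
      Function.Injective (MonoidHom.noncommPiCoprod (fun j => (Hs j).subtype) hc) ∧
      (MonoidHom.noncommPiCoprod (fun j => (Hs j).subtype) hc).range = fixedBy (φ b) := by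
  have hKinj := injective_of_pairwise_commute_of_noncomm hnonab hcomm
  obtain ⟨σ, hσ⟩ := exists_hom_perm_map_eq φ hKinj hperm
  let _ : MulAction A (Fin n) := MulAction.compHom _ σ
  have hfree := stabilizer_zpowers_eq_bot fun m hm i hi =>
    hsemireg m hm i (by rw [hσ]; exact congrArg Ks hi)
  obtain ⟨r, e, he⟩ := exists_transversal_equiv_prod (J := Fin (n / orderOf b)) hfree
    (by simp [Nat.card_zpowers])
  set Ψ := diagonalEmbedding hσ he hcomm
  have hΨ : Function.Injective Ψ := diagonalEmbedding_injective hσ he hcomm hprod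
  have hiso : ∀ j, Nonempty ((Ψ.comp (MonoidHom.mulSingle _ j)).range ≃* Ks ⟨0, hn⟩) := by
    intro j
    obtain ⟨a, ha⟩ := htrans (r j) ⟨0, hn⟩
    exact ⟨(MonoidHom.ofInjective (f := Ψ.comp (MonoidHom.mulSingle _ j))
      (hΨ.comp (Pi.mulSingle_injective j))).symm.trans
        (((φ a).subgroupMap _).trans (MulEquiv.subgroupCongr ha))⟩
  refine ⟨fun j => (Ψ.comp (MonoidHom.mulSingle _ j)).range, Ψ.commute_range_comp_mulSingle,
    hiso, fun j => ?_, fun j => ?_,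
    fun a j => ⟨_, map_range_diagonalEmbedding_comp_mulSingle hσ he hcomm hprod a j⟩,
    fun j k => ?_, MonoidHom.injective_noncommPiCoprod_range_comp_mulSingle hΨ,
    (Ψ.range_noncommPiCoprod_range_comp_mulSingle).trans
      (range_diagonalEmbedding hσ he hcomm hprod)⟩
  · obtain ⟨f⟩ := hiso j
    have := hsimple ⟨0, hn⟩
    exact f.isSimpleGroup
  · obtain ⟨f⟩ := hiso j
    rw [f.forall_mul_comm_iff]
    exact hnonab _
  · obtain ⟨a, ha⟩ := htrans (r j) (r k)
    refine ⟨a, ?_⟩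
    rw [map_range_diagonalEmbedding_comp_mulSingle hσ he hcomm hprod, show a • r j = r k from
      hKinj ((hσ a (r j)).symm.trans ha), transversal_apply_rep he]

theorem stmt12 {A G : Type*} [CommGroup A] [Group G] [Finite G]
    (φ : A →* MulAut G) (n : ℕ) (hn : 0 < n) (Ks : Fin n → Subgroup G)
    (hsimple : ∀ i, IsSimpleGroup (Ks i))
    (hnonab : ∀ i, ¬ ∀ x y : (Ks i), x * y = y * x)
    (hcomm : Pairwise fun i j => ∀ (x : (Ks i)) (y : (Ks j)),
      Commute ((Ks i).subtype x) ((Ks j).subtype y))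
    (hprod : Function.Bijective
      (MonoidHom.noncommPiCoprod (fun i => (Ks i).subtype) hcomm))
    (hperm : ∀ (a : A) (i : Fin n), ∃ j, (Ks i).map (φ a).toMonoidHom = Ks j)
    (htrans : ∀ i j : Fin n, ∃ a : A, (Ks i).map (φ a).toMonoidHom = Ks j)
    (b : A)
    (hsemireg : ∀ m : ℤ, b ^ m ≠ 1 → ∀ i, (Ks i).map (φ (b ^ m)).toMonoidHom ≠ Ks i) :
    ∃ (Hs : Fin (n / orderOf b) → Subgroup G)
      (hc : Pairwise fun j k => ∀ (x : (Hs j)) (y : (Hs k)),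
        Commute ((Hs j).subtype x) ((Hs k).subtype y)),
      (∀ j, Nonempty ((Hs j) ≃* (Ks ⟨0, hn⟩))) ∧
      (∀ j, IsSimpleGroup (Hs j)) ∧
      (∀ j, ¬ ∀ x y : (Hs j), x * y = y * x) ∧
      (∀ (a : A) (j), ∃ k, (Hs j).map (φ a).toMonoidHom = Hs k) ∧
      (∀ j k, ∃ a : A, (Hs j).map (φ a).toMonoidHom = Hs k) ∧
      Function.Injective (MonoidHom.noncommPiCoprod (fun j => (Hs j).subtype) hc) ∧
      (MonoidHom.noncommPiCoprod (fun j => (Hs j).subtype) hc).range = fixedBy (φ b) :=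
  stmt12_general φ n hn Ks hsimple hnonab hcomm hprod hperm htrans b hsemireg
end
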